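/- Theorem 1 (set-equality form). Let d, K, m be natural numbers and fix a coordinate (i,k) ∈ Fin d × Fin (K+1). Let F be the set of functions f : ((Fin d × Fin (K+1)) → ℝ) → ℝ such that there exist kernel weights C : Fin m → (Fin d × Fin (K+1)) → ℝ and a continuation function h : (Fin m → ℝ) → ℝ with f = h ∘ L_C and f independent of the input coordinate (i,k). Let F₀ be the set of functions f such that there exist kernel weights C' with C' b (i,k) = 0 for all b ∈ Fin m and a continuation function h with f = h ∘ L_{C'}. Then F = F₀. -/

import Mathlib

/-!
The weight `C b (i,k)` and the input entry `X (i,k)` enter `L_C X b` only through their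
product, so zeroing the weights at `(i,k)` has the same effect as zeroing the input entry there.
Hence a network `h ∘ L_C` that ignores `X (i,k)` equals `h ∘ L_C'`, where `C'` is `C` with its
weights at `(i,k)` set to zero; conversely, a network with zero weights at `(i,k)` ignores `X (i,k)`.
-/

/-- The first 1D-convolution layer: `m` kernels of shape `d × (K+1)`,
each producing the weighted sum of the input entries. -/
def convLayer {d K m : ℕ} (C : Fin m → (Fin d × Fin (K+1)) → ℝ)
    (X : (Fin d × Fin (K+1)) → ℝ) : Fin m → ℝ :=
  fun b => ∑ p : Fin d × Fin (K+1), C b p * X p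

section convLayer

variable {d K m : ℕ} (C : Fin m → (Fin d × Fin (K+1)) → ℝ) (ik : Fin d × Fin (K+1))

theorem convLayer_update_kernel_zero (X : (Fin d × Fin (K+1)) → ℝ) :
    convLayer (fun b => Function.update (C b) ik 0) X = convLayer C (Function.update X ik 0) := by
  funext b
  refine Finset.sum_congr rfl fun p _ => ?_
  rcases eq_or_ne p ik with rfl | hp
  · simp
  · simp only [Function.update_of_ne hp]

theorem convLayer_update_of_kernel_eq_zero (hC : ∀ b, C b ik = 0)
    (X : (Fin d × Fin (K+1)) → ℝ) (v : ℝ) :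
    convLayer C (Function.update X ik v) = convLayer C X := by
  have hC' : (fun b => Function.update (C b) ik 0) = C :=
    funext fun b => Function.update_eq_self_iff.2 (hC b).symm
  have hzero (Y) : convLayer C (Function.update Y ik 0) = convLayer C Y := by
    rw [← convLayer_update_kernel_zero, hC']
  rw [← hzero, Function.update_idem, hzero]

end convLayer

/-- Theorem 1 (set-equality form): the set `F` of first-layer CNNs (with `m`
kernels and continuation `h`) that are independent of the input coordinate
`ik` equals the set `F₀` of first-layer CNNs whose first-layer kernel weights
at `ik` are all zero. -/
theorem independent_CNNs_eq_zero_kernel_CNNs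
    (d K m : ℕ) (ik : Fin d × Fin (K+1)) :
    {f : ((Fin d × Fin (K+1)) → ℝ) → ℝ |
        ∃ (C : Fin m → (Fin d × Fin (K+1)) → ℝ) (h : (Fin m → ℝ) → ℝ),
          f = h ∘ convLayer C ∧
          ∀ (X : (Fin d × Fin (K+1)) → ℝ) (v : ℝ),
            f (Function.update X ik v) = f X}
      = {f : ((Fin d × Fin (K+1)) → ℝ) → ℝ |
          ∃ (C' : Fin m → (Fin d × Fin (K+1)) → ℝ) (h : (Fin m → ℝ) → ℝ),
            (∀ b : Fin m, C' b ik = 0) ∧ f = h ∘ convLayer C'} := by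
  ext f
  constructor
  · rintro ⟨C, h, rfl, hindep⟩
    refine ⟨fun b => Function.update (C b) ik 0, h, fun b => Function.update_self .., ?_⟩
    funext X
    simp only [Function.comp_apply, convLayer_update_kernel_zero]
    exact (hindep X 0).symm
  · rintro ⟨C', h, hC', rfl⟩
    refine ⟨C', h, rfl, fun X v => ?_⟩
    simp only [Function.comp_apply, convLayer_update_of_kernel_eq_zero C' ik hC']
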